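/- Let n ∈ ℕ, L > 0, γ > 0, let J be a real n×n matrix and D a real n×n matrix, set H₁ = J − (γπ²/L²) D, and suppose s ∈ ℂ^n and θ ∈ ℝ satisfy H₁ s = iθ s. Define the real-valued function u(x,t) = 2 Re(e^{iθt} s) cos(πx/L) ∈ ℝ^n. Then u solves ∂_t u = J u + γ D ∂_x² u on [0,L] × ℝ with Neumann boundary conditions ∂_x u(0,t) = ∂_x u(L,t) = 0, and for each component A with polar decomposition s_A = |s_A| e^{iν_A}, one has u_A(x,t) = 2 |s_A| cos(ν_A + θ t) cos(πx/L). -/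

import Mathlib

/-!
Separation of variables: `u x t = cos (π x / L) • v t` with `v t = Re (e^{iθt} • 2s)`.
Because `H₁` is real, the real part of the complex solution `e^{iθt} s` of `z' = H₁ z` solves
`v' = H₁ v`; and `cos (π x / L)` is a Neumann eigenfunction of `∂_x²` with eigenvalue `-(π/L)²`,
so the diffusion term `γ D ∂_x² u` contributes exactly the `-(γπ²/L²) D` part of `H₁`.
-/

open Matrix Real Set

section

variable {ι : Type*} [Fintype ι]

lemma Matrix.re_map_ofReal_mulVec (H : Matrix ι ι ℝ) (w : ι → ℂ) (A : ι) :
    (((H.map Complex.ofReal) *ᵥ w) A).re = (H *ᵥ fun B => (w B).re) A := by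
  simp [mulVec, dotProduct, Complex.re_sum]

lemma hasDerivAt_re_exp_mul_eigenvector {H : Matrix ι ι ℝ} {s : ι → ℂ} {μ : ℂ}
    (hs : (H.map Complex.ofReal) *ᵥ s = μ • s) (t : ℝ) :
    HasDerivAt (fun τ : ℝ => fun A => (Complex.exp (μ * τ) * s A).re)
      (H *ᵥ fun A => (Complex.exp (μ * t) * s A).re) t := by
  rw [hasDerivAt_pi]
  intro A
  have hexp : HasDerivAt (fun z : ℂ => Complex.exp (μ * z) * s A)
      ((H.map Complex.ofReal *ᵥ fun B => Complex.exp (μ * t) * s B) A) t := by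
    refine (((hasDerivAt_const_mul μ).cexp).mul_const (s A)).congr_deriv ?_
    rw [show (fun B => Complex.exp (μ * t) * s B) = Complex.exp (μ * t) • s from rfl,
      mulVec_smul, hs]
    simp only [Pi.smul_apply, smul_eq_mul]
    ring
  simpa only [Matrix.re_map_ofReal_mulVec] using hexp.real_of_complex

lemma deriv_separated_eq_reaction_add_diffusion {J D : Matrix ι ι ℝ} {γ k : ℝ} {φ φ' : ℝ → ℝ}
    {v : ℝ → ι → ℝ} {x t : ℝ}
    (hφ : ∀ y, HasDerivAt φ (φ' y) y) (hφ' : HasDerivAt φ' (-k ^ 2 * φ x) x)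
    (hv : HasDerivAt v ((J - (γ * k ^ 2) • D) *ᵥ v t) t) :
    deriv (fun τ => φ x • v τ) t
      = J *ᵥ (φ x • v t) + γ • D *ᵥ deriv (fun y => deriv (fun z => φ z • v t) y) x := by
  have hxx : deriv (fun y => deriv (fun z => φ z • v t) y) x = (-k ^ 2 * φ x) • v t := by
    have hx : (fun y => deriv (fun z => φ z • v t) y) = fun y => φ' y • v t :=
      funext fun y => ((hφ y).smul_const (v t)).deriv
    rw [hx]
    exact (hφ'.smul_const (v t)).deriv
  have ht : HasDerivAt (fun τ => φ x • v τ) _ t := hv.const_smul (φ x)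
  rw [ht.deriv, hxx, mulVec_smul, mulVec_smul, sub_mulVec, smul_mulVec]
  module

end

lemma hasDerivAt_cos_const_mul (k y : ℝ) :
    HasDerivAt (fun y => cos (k * y)) (-k * sin (k * y)) y := by
  refine (hasDerivAt_const_mul k).cos.congr_deriv ?_
  ring

lemma hasDerivAt_neg_const_mul_sin_const_mul (k y : ℝ) :
    HasDerivAt (fun y => -k * sin (k * y)) (-k ^ 2 * cos (k * y)) y := by
  refine (((hasDerivAt_const_mul k).sin).const_mul (-k)).congr_deriv ?_
  ring

lemma re_exp_ofReal_mul_I_mul_of_eq_polar {z : ℂ} {ν : ℝ}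
    (hz : z = ‖z‖ * Complex.exp (ν * Complex.I)) (φ : ℝ) :
    (Complex.exp (φ * Complex.I) * z).re = ‖z‖ * Real.cos (ν + φ) := by
  conv_lhs => rw [hz]
  rw [mul_left_comm, ← Complex.exp_add, ← add_mul, ← Complex.ofReal_add, add_comm φ,
    Complex.re_ofReal_mul, Complex.exp_ofReal_mul_I_re]

theorem oscillatory_mode_of_imaginary_eigenvalue_general
    (n : ℕ) (L γ : ℝ) (hL : 0 < L)
    (J D H₁ : Matrix (Fin n) (Fin n) ℝ)
    (hH₁ : H₁ = J - (γ * π^2 / L^2) • D)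
    (s : Fin n → ℂ) (θ : ℝ)
    (hs : (H₁.map (Complex.ofReal)).mulVec s = ((θ : ℂ) * Complex.I) • s)
    (ν : Fin n → ℝ)
    (hν : ∀ A : Fin n, s A = (‖s A‖ : ℂ) * Complex.exp ((ν A : ℂ) * Complex.I))
    (u : ℝ → ℝ → (Fin n → ℝ))
    (hu : ∀ (x t : ℝ) (A : Fin n),
      u x t A = 2 * (Complex.exp (((θ * t : ℝ) : ℂ) * Complex.I) * s A).re
        * Real.cos (π * x / L)) :
    (∀ x ∈ Icc (0:ℝ) L, ∀ t : ℝ,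
        deriv (fun τ => u x τ) t
          = J.mulVec (u x t) + γ • D.mulVec (deriv (fun y => deriv (fun z => u z t) y) x))
      ∧ (∀ t : ℝ, deriv (fun y => u y t) 0 = 0)
      ∧ (∀ t : ℝ, deriv (fun y => u y t) L = 0)
      ∧ (∀ (x t : ℝ) (A : Fin n),
          u x t A = 2 * ‖s A‖ * Real.cos (ν A + θ * t) * Real.cos (π * x / L)) := by
  set v : ℝ → Fin n → ℝ := fun t A => (Complex.exp (θ * Complex.I * t) * ((2 : ℝ) • s) A).re
  have hu_eq : u = fun x t => cos (π / L * x) • v t := by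
    funext x t A
    simp only [hu, v, Pi.smul_apply, mul_smul_comm, Complex.smul_re, smul_eq_mul,
      div_mul_eq_mul_div]
    push_cast
    ring_nf
  have hv : ∀ t, HasDerivAt v ((J - (γ * (π / L) ^ 2) • D) *ᵥ v t) t := by
    have hk : γ * π ^ 2 / L ^ 2 = γ * (π / L) ^ 2 := by ring
    rw [← hk, ← hH₁]
    exact hasDerivAt_re_exp_mul_eigenvector (by rw [mulVec_smul, hs, smul_comm])
  refine ⟨fun x _ t => ?_, fun t => ?_, fun t => ?_, fun x t A => ?_⟩
  · rw [hu_eq]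
    exact deriv_separated_eq_reaction_add_diffusion (hasDerivAt_cos_const_mul _)
      (hasDerivAt_neg_const_mul_sin_const_mul _ _) (hv t)
  · rw [hu_eq, ((hasDerivAt_cos_const_mul _ _).smul_const _).deriv]
    simp
  · rw [hu_eq, ((hasDerivAt_cos_const_mul _ _).smul_const _).deriv, div_mul_cancel₀ π hL.ne']
    simp
  · rw [hu, re_exp_ofReal_mul_I_mul_of_eq_polar (hν A)]
    ring

/-- If `H₁ = J − (γπ²/L²) D` has a purely imaginary eigenvalue `iθ` with eigenvector `s`,
then `u(x,t) = 2 Re(e^{iθt} s) cos(πx/L)` is a real oscillatory solution of the linearized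
system `∂_t u = J u + γ D ∂_x² u` with Neumann boundary conditions, and each component
satisfies `u_A(x,t) = 2|s_A| cos(ν_A + θt) cos(πx/L)` where `s_A = |s_A| e^{iν_A}`. -/
theorem oscillatory_mode_of_imaginary_eigenvalue
    (n : ℕ) (L γ : ℝ) (hL : 0 < L) (hγ : 0 < γ)
    (J D H₁ : Matrix (Fin n) (Fin n) ℝ)
    (hH₁ : H₁ = J - (γ * π^2 / L^2) • D)
    (s : Fin n → ℂ) (θ : ℝ)
    (hs : (H₁.map (Complex.ofReal)).mulVec s = ((θ : ℂ) * Complex.I) • s)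
    (ν : Fin n → ℝ)
    (hν : ∀ A : Fin n, s A = (‖s A‖ : ℂ) * Complex.exp ((ν A : ℂ) * Complex.I))
    (u : ℝ → ℝ → (Fin n → ℝ))
    (hu : ∀ (x t : ℝ) (A : Fin n),
      u x t A = 2 * (Complex.exp (((θ * t : ℝ) : ℂ) * Complex.I) * s A).re
        * Real.cos (π * x / L)) :
    (∀ x ∈ Icc (0:ℝ) L, ∀ t : ℝ,
        deriv (fun τ => u x τ) t
          = J.mulVec (u x t) + γ • D.mulVec (deriv (fun y => deriv (fun z => u z t) y) x))
      ∧ (∀ t : ℝ, deriv (fun y => u y t) 0 = 0)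
      ∧ (∀ t : ℝ, deriv (fun y => u y t) L = 0)
      ∧ (∀ (x t : ℝ) (A : Fin n),
          u x t A = 2 * ‖s A‖ * Real.cos (ν A + θ * t) * Real.cos (π * x / L)) :=
  oscillatory_mode_of_imaginary_eigenvalue_general n L γ hL J D H₁ hH₁ s θ hs ν hν u hu
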